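/- Greedy maximal-cardinality invariance: let T be a trajectory, Δ ≥ 0, and P a fixed subtrajectory of T. Let ℐ be the set of all intervals [x, y] ⊆ [1, n] with D_F(P, T[x, y]) ≤ Δ. Assume ℐ is closed under the operation: if [x, y] ∈ ℐ and there is [x', y] ∈ ℐ with x' > x, the maximal such x' also gives [x', y] ∈ ℐ. Then the maximum number of pairwise disjoint intervals selectable from ℐ equals the number produced by scanning y from n downward and greedily taking, for the largest feasible y, the interval [x*, y] with maximal left endpoint x*, then continuing below x*. -/

import Mathlib

/-- One step of a discrete walk: each coordinate stays or decreases by one. -/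
def Step (p q : ℕ × ℕ) : Prop :=
  (q.1 = p.1 ∨ q.1 + 1 = p.1) ∧ (q.2 = p.2 ∨ q.2 + 1 = p.2)

/-- A discrete walk from `(x, y)` down to `(1, 1)`. -/
def IsWalk (F : List (ℕ × ℕ)) (x y : ℕ) : Prop :=
  F.head? = some (x, y) ∧ F.getLast? = some (1, 1) ∧ List.Chain' Step F

/-- The cost of a discrete walk: maximum pointwise distance along the walk. -/
noncomputable def walkCost (P Q : ℕ → ℝ × ℝ) (F : List (ℕ × ℕ)) : ℝ :=
  (F.map fun p => dist (P p.1) (Q p.2)).foldr max 0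

/-- The discrete Fréchet distance between the sequences `P 1, …, P x` and `Q 1, …, Q y`. -/
noncomputable def dF (P : ℕ → ℝ × ℝ) (x : ℕ) (Q : ℕ → ℝ × ℝ) (y : ℕ) : ℝ :=
  sInf {c | ∃ F, IsWalk F x y ∧ walkCost P Q F = c}

/-- The subtrajectory of `T` starting at index `a`, reindexed from `1`. -/
def subtraj (T : ℕ → ℝ × ℝ) (a : ℕ) : ℕ → ℝ × ℝ := fun i => T (a + i - 1)

open Classical in
/-- The right-to-left greedy scan over an interval family Iv: scanning the right endpoint
y downwards, at the largest feasible y take the interval (x*, y) with maximal left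
endpoint x*, then continue below x*. -/
noncomputable def greedyScan (Iv : Set (ℕ × ℕ)) : ℕ → Finset (ℕ × ℕ)
  | 0 => ∅
  | (y + 1) =>
    if _h : ∃ x, (x, y + 1) ∈ Iv then
      insert (Nat.findGreatest (fun x => (x, y + 1) ∈ Iv) (y + 1), y + 1)
        (greedyScan Iv (Nat.findGreatest (fun x => (x, y + 1) ∈ Iv) (y + 1) - 1))
    else greedyScan Iv y
  decreasing_by
  · have := Nat.findGreatest_le (P := fun x => (x, y + 1) ∈ Iv) (y + 1)
    omega
  · omega

/-!
If `[a, b] ⊆ [x, y]` are both feasible intervals, then so is `[a, y]`: in the free space of `P`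
against `T`, the walks witnessing `[x, y]` and `[a, b]` both run from row `ℓ` down to row `1`, the
first starting right of the second and ending left of it, so they meet, and splicing them there
gives a walk witnessing `[a, y]`. Given this, the greedy choice is safe: if `x*` is the largest
left endpoint of a feasible interval ending at the largest feasible right endpoint `y`, every
interval of a disjoint feasible family that reaches `x*` must start at or before `x*` (otherwise
it would extend to a feasible interval `[x', y]` with `x' > x*`), so at most one interval of the
family reaches `x*`, and the others lie in `[1, x* - 1]`, where induction applies.
-/

theorem Step.le {p q : ℕ × ℕ} (h : Step p q) : q ≤ p :=
  ⟨by rcases h.1 with h | h <;> omega, by rcases h.2 with h | h <;> omega⟩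

/-- Reachability by monotone walks whose cells after the start lie in `A`. -/
def Reach (A : Set (ℕ × ℕ)) : ℕ × ℕ → ℕ × ℕ → Prop :=
  Relation.ReflTransGen fun p q => Step p q ∧ q ∈ A

namespace Reach

variable {A : Set (ℕ × ℕ)}

theorem le {p q : ℕ × ℕ} (h : Reach A p q) : q ≤ p := by
  induction h with
  | refl => exact le_rfl
  | tail _ hs ih => exact hs.1.le.trans ih

theorem head {p q r : ℕ × ℕ} (hs : Step p q) (hq : q ∈ A) (h : Reach A q r) : Reach A p r :=
  Relation.ReflTransGen.head ⟨hs, hq⟩ h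

/-- The two walks must meet: follow the first up to the meeting cell and the second from there. -/
theorem cross {u u' v v' : ℕ × ℕ} (hu : Reach A u u') (hv : Reach A v v')
    (h₁ : u.1 = v.1) (h₂ : v.2 ≤ u.2) (h₁' : u'.1 = v'.1) (h₂' : u'.2 ≤ v'.2) :
    Reach A u v' := by
  induction hu using Relation.ReflTransGen.head_induction_on generalizing v with
  | refl =>
    have hv' := Reach.le hv
    simp only [Prod.le_def] at hv'
    obtain rfl : v' = u' := Prod.ext (by omega) (by omega)
    exact Relation.ReflTransGen.refl
  | @head u u₁ hstep hu₁ ih =>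
    obtain ⟨hstep, hmem⟩ := hstep
    have hu₁' := Reach.le hu₁
    simp only [Prod.le_def] at hu₁'
    by_cases hvu : v = u
    · exact hvu ▸ hv
    replace h₂ : v.2 < u.2 := h₂.lt_of_ne fun h => hvu (Prod.ext h₁.symm h)
    clear hvu
    rcases hstep.1 with hrow | hrow
    · exact head hstep hmem (ih hv (by omega) (by rcases hstep.2 with h | h <;> omega))
    · induction hv using Relation.ReflTransGen.head_induction_on with
      | refl => omega
      | @head v v₁ hvstep hv₁ ihv =>
        obtain ⟨hvstep, -⟩ := hvstep
        rcases hvstep.1 with hvrow | hvrow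
        · exact ihv (by omega) (by rcases hvstep.2 with h | h <;> omega)
        · refine head hstep hmem (ih hv₁ (by omega) ?_)
          rcases hvstep.2 with h | h <;> rcases hstep.2 with h' | h' <;> omega

end Reach

def freeSpace (P Q : ℕ → ℝ × ℝ) (Δ : ℝ) : Set (ℕ × ℕ) :=
  {p | dist (P p.1) (Q p.2) ≤ Δ}

section Walks

variable {P Q : ℕ → ℝ × ℝ} {Δ : ℝ} {F : List (ℕ × ℕ)} {x y : ℕ}

theorem walkCost_le_iff : walkCost P Q F ≤ Δ ↔ 0 ≤ Δ ∧ ∀ p ∈ F, p ∈ freeSpace P Q Δ := by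
  induction F with
  | nil => simp [walkCost]
  | cons a F ih =>
    simp only [walkCost, List.map_cons, List.foldr_cons, max_le_iff] at ih ⊢
    rw [ih]
    simp only [List.mem_cons, forall_eq_or_imp, freeSpace, Set.mem_ofPred_eq]
    tauto

theorem walkCost_eq_zero_or_mem (P Q : ℕ → ℝ × ℝ) (F : List (ℕ × ℕ)) :
    walkCost P Q F = 0 ∨ ∃ p ∈ F, walkCost P Q F = dist (P p.1) (Q p.2) := by
  induction F with
  | nil => exact .inl rfl
  | cons a F ih =>
    simp only [walkCost, List.map_cons, List.foldr_cons] at ih ⊢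
    rcases max_choice (dist (P a.1) (Q a.2)) ((F.map fun p => dist (P p.1) (Q p.2)).foldr max 0)
      with h | h <;> rw [h]
    · exact .inr ⟨a, List.mem_cons_self, rfl⟩
    · rcases ih with ih | ⟨p, hp, ih⟩
      · exact .inl ih
      · exact .inr ⟨p, List.mem_cons_of_mem a hp, ih⟩

theorem isWalk_iff_reach {A : Set (ℕ × ℕ)} :
    (∃ F, IsWalk F x y ∧ ∀ p ∈ F, p ∈ A) ↔ (x, y) ∈ A ∧ Reach A (x, y) (1, 1) := by
  constructor
  · rintro ⟨_ | ⟨a, l⟩, ⟨hhead, hlast, hchain⟩, hA⟩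
    · simp at hhead
    obtain rfl : a = (x, y) := by simpa using hhead
    refine ⟨hA _ List.mem_cons_self, List.relationReflTransGen_of_exists_isChain_cons l ?_ ?_⟩
    · exact hchain.imp_of_mem_imp fun p q _ hq hs => ⟨hs, hA q hq⟩
    · rw [List.getLast?_eq_some_getLast (List.cons_ne_nil _ _)] at hlast
      exact Option.some.inj hlast
  · rintro ⟨hxy, hreach⟩
    obtain ⟨l, hchain, hlast⟩ := List.exists_isChain_cons_of_relationReflTransGen hreach
    refine ⟨(x, y) :: l, ⟨rfl, ?_, hchain.imp fun _ _ h => h.1⟩, ?_⟩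
    · rw [List.getLast?_eq_some_getLast (List.cons_ne_nil _ _), hlast]
    · rintro p (_ | ⟨_, hp⟩)
      · exact hxy
      · exact hchain.cons_induction (· ∈ A) l (fun _ _ h _ => h.2) hxy p hp

theorem IsWalk.le (hF : IsWalk F x y) : ∀ p ∈ F, p ≤ (x, y) := by
  obtain ⟨hhead, -, hchain⟩ := hF
  rcases F with _ | ⟨a, l⟩
  · simp at hhead
  obtain rfl : a = (x, y) := by simpa using hhead
  rintro p (_ | ⟨_, hp⟩)
  · exact le_rfl
  · exact hchain.cons_induction (· ≤ (x, y)) l (fun _ _ h hp => h.le.trans hp) le_rfl p hp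

theorem reach_univ_one_one (hx : 1 ≤ x) (hy : 1 ≤ y) : Reach Set.univ (x, y) (1, 1) := by
  have hrow : ∀ a, 1 ≤ a → Reach Set.univ (a, y) (1, y) := fun a ha => by
    induction a, ha using Nat.le_induction with
    | base => exact .refl
    | succ a _ ih => exact Reach.head (q := (a, y)) ⟨Or.inr rfl, Or.inl rfl⟩ trivial ih
  have hcol : ∀ b, 1 ≤ b → Reach Set.univ (1, b) (1, 1) := fun b hb => by
    induction b, hb using Nat.le_induction with
    | base => exact .refl
    | succ b _ ih => exact Reach.head (q := (1, b)) ⟨Or.inl rfl, Or.inr rfl⟩ trivial ih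
  exact (hrow x hx).trans (hcol y hy)

theorem exists_walkCost_eq_dF (hx : 1 ≤ x) (hy : 1 ≤ y) :
    ∃ F, IsWalk F x y ∧ walkCost P Q F = dF P x Q y := by
  have hne : {c | ∃ F, IsWalk F x y ∧ walkCost P Q F = c}.Nonempty := by
    obtain ⟨F, hF, -⟩ := (isWalk_iff_reach (A := Set.univ)).2 ⟨trivial, reach_univ_one_one hx hy⟩
    exact ⟨_, F, hF, rfl⟩
  have hfin : {c | ∃ F, IsWalk F x y ∧ walkCost P Q F = c}.Finite := by
    refine ((Set.finite_Iic (x, y)).image fun p => dist (P p.1) (Q p.2)).insert 0 |>.subset ?_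
    rintro _ ⟨F, hF, rfl⟩
    rcases walkCost_eq_zero_or_mem P Q F with h | ⟨p, hp, h⟩
    · exact .inl h
    · exact .inr ⟨p, hF.le p hp, h.symm⟩
  exact hne.csInf_mem hfin

theorem dF_le_iff (hx : 1 ≤ x) (hy : 1 ≤ y) :
    dF P x Q y ≤ Δ ↔ (x, y) ∈ freeSpace P Q Δ ∧ Reach (freeSpace P Q Δ) (x, y) (1, 1) := by
  rw [← isWalk_iff_reach]
  constructor
  · intro h
    obtain ⟨F, hF, hcost⟩ := exists_walkCost_eq_dF (P := P) (Q := Q) hx hy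
    exact ⟨F, hF, (walkCost_le_iff.1 (hcost.trans_le h)).2⟩
  · rintro ⟨F, hF, hfree⟩
    have hΔ : 0 ≤ Δ := dist_nonneg.trans (hfree _ (List.mem_of_mem_head? hF.1))
    have hbdd : BddBelow {c | ∃ F, IsWalk F x y ∧ walkCost P Q F = c} := by
      refine ⟨0, ?_⟩
      rintro _ ⟨G, -, rfl⟩
      exact (walkCost_le_iff.1 le_rfl).1
    exact (csInf_le hbdd ⟨F, hF, rfl⟩).trans (walkCost_le_iff.2 ⟨hΔ, hfree⟩)

end Walks

theorem reach_shift_iff {A : Set (ℕ × ℕ)} (s : ℕ) {p q : ℕ × ℕ} :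
    Reach {c | (c.1, c.2 + s) ∈ A} p q ↔ Reach A (p.1, p.2 + s) (q.1, q.2 + s) := by
  constructor
  · refine Relation.ReflTransGen.lift (fun c : ℕ × ℕ => (c.1, c.2 + s)) ?_ p q
    rintro c d ⟨⟨h₁, h₂⟩, hd⟩
    exact ⟨⟨h₁, by dsimp only; omega⟩, hd⟩
  · -- every cell of the walk lies above its end, so shifting back by `s` loses nothing
    suffices key : ∀ u, Reach A u (q.1, q.2 + s) →
        Reach {c | (c.1, c.2 + s) ∈ A} (u.1, u.2 - s) q from fun h => by simpa using key _ h
    intro u h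
    induction h using Relation.ReflTransGen.head_induction_on with
    | refl => simpa using .refl
    | @head u u₁ hstep hrest ih =>
      obtain ⟨⟨h₁, h₂⟩, hu₁⟩ := hstep
      have hle : q.2 + s ≤ u₁.2 := (Reach.le hrest).2
      refine Reach.head (q := (u₁.1, u₁.2 - s)) ⟨h₁, by omega⟩ ?_ ih
      simpa [Nat.sub_add_cancel (le_of_add_le_right hle)] using hu₁

section Subtrajectories

variable {P T : ℕ → ℝ × ℝ} {Δ : ℝ} {ℓ a b x y : ℕ}

theorem freeSpace_subtraj (ha : 1 ≤ a) :
    freeSpace P (subtraj T a) Δ = {c | (c.1, c.2 + (a - 1)) ∈ freeSpace P T Δ} := by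
  ext c
  simp only [freeSpace, subtraj, Set.mem_ofPred_eq]
  rw [show a + c.2 - 1 = c.2 + (a - 1) by omega]

theorem dF_subtraj_le_iff (hℓ : 1 ≤ ℓ) (ha : 1 ≤ a) (hab : a ≤ b) :
    dF P ℓ (subtraj T a) (b - a + 1) ≤ Δ ↔
      (ℓ, b) ∈ freeSpace P T Δ ∧ Reach (freeSpace P T Δ) (ℓ, b) (1, a) := by
  rw [dF_le_iff hℓ (by omega), freeSpace_subtraj ha, reach_shift_iff]
  simp only [Set.mem_ofPred_eq, show b - a + 1 + (a - 1) = b by omega,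
    show 1 + (a - 1) = a by omega]

theorem dF_subtraj_le_of_nested (hℓ : 1 ≤ ℓ) (hx : 1 ≤ x) (hxa : x ≤ a) (hab : a ≤ b)
    (hby : b ≤ y) (hdxy : dF P ℓ (subtraj T x) (y - x + 1) ≤ Δ)
    (hdab : dF P ℓ (subtraj T a) (b - a + 1) ≤ Δ) :
    dF P ℓ (subtraj T a) (y - a + 1) ≤ Δ := by
  obtain ⟨hy, hreach_xy⟩ := (dF_subtraj_le_iff hℓ hx (by omega)).1 hdxy
  obtain ⟨-, hreach_ab⟩ := (dF_subtraj_le_iff hℓ (by omega) hab).1 hdab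
  exact (dF_subtraj_le_iff hℓ (by omega) (by omega)).2
    ⟨hy, hreach_xy.cross hreach_ab rfl hby rfl hxa⟩

end Subtrajectories

theorem Finset.card_le_one_of_pairwiseDisjoint_of_mem {ι α : Type*} {s : Finset ι}
    {f : ι → Finset α} {a : α} (hs : (s : Set ι).PairwiseDisjoint f) (ha : ∀ i ∈ s, a ∈ f i) :
    s.card ≤ 1 :=
  Finset.card_le_one.2 fun i hi j hj => by_contra fun hij =>
    Finset.disjoint_left.1 (hs hi hj hij) (ha i hi) (ha j hj)

section Greedy

open Classical

variable {Iv : Set (ℕ × ℕ)}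

theorem findGreatest_mem (hIv : ∀ p ∈ Iv, p.1 ≤ p.2) {y : ℕ} (h : ∃ x, (x, y) ∈ Iv) :
    (Nat.findGreatest (fun x => (x, y) ∈ Iv) y, y) ∈ Iv := by
  obtain ⟨x, hx⟩ := h
  exact Nat.findGreatest_spec (P := fun x => (x, y) ∈ Iv) (hIv _ hx) hx

theorem snd_mem_Icc_of_mem_greedyScan {m : ℕ} {p : ℕ × ℕ} (hp : p ∈ greedyScan Iv m) :
    1 ≤ p.2 ∧ p.2 ≤ m := by
  fun_induction greedyScan Iv m with
  | case1 => simp at hp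
  | case2 y _ ih =>
    have := Nat.findGreatest_le (P := fun x => (x, y + 1) ∈ Iv) (y + 1)
    rcases Finset.mem_insert.1 hp with rfl | hp
    · exact ⟨Nat.succ_pos y, le_rfl⟩
    · have := ih hp
      omega
  | case3 y _ ih => exact (ih hp).imp_right (Nat.le_succ_of_le ·)

theorem greedyScan_subset (hIv : ∀ p ∈ Iv, p.1 ≤ p.2) (m : ℕ) : ↑(greedyScan Iv m) ⊆ Iv := by
  fun_induction greedyScan Iv m with
  | case1 => simp
  | case2 y h ih =>
    rw [Finset.coe_insert]
    exact Set.insert_subset (findGreatest_mem hIv h) ih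
  | case3 y _ ih => exact ih

theorem greedyScan_pairwiseDisjoint (m : ℕ) :
    (↑(greedyScan Iv m) : Set (ℕ × ℕ)).PairwiseDisjoint fun p => Finset.Icc p.1 p.2 := by
  fun_induction greedyScan Iv m with
  | case1 => simp
  | case2 y _ ih =>
    rw [Finset.coe_insert]
    refine ih.insert fun q hq _ => Finset.disjoint_left.2 fun k hk hk' => ?_
    have := snd_mem_Icc_of_mem_greedyScan hq
    simp only [Finset.mem_Icc] at hk hk'
    omega
  | case3 y _ ih => exact ih

theorem card_le_card_greedyScan (hIv : ∀ p ∈ Iv, 1 ≤ p.1 ∧ p.1 ≤ p.2)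
    (hnest : ∀ ⦃p q⦄, p ∈ Iv → q ∈ Iv → p.1 ≤ q.1 → q.2 ≤ p.2 → (q.1, p.2) ∈ Iv)
    (m : ℕ) {J : Finset (ℕ × ℕ)} (hJ : ↑J ⊆ Iv)
    (hdisj : (↑J : Set (ℕ × ℕ)).PairwiseDisjoint fun p => Finset.Icc p.1 p.2)
    (hm : ∀ p ∈ J, p.2 ≤ m) : J.card ≤ (greedyScan Iv m).card := by
  fun_induction greedyScan Iv m generalizing J with
  | case1 =>
    suffices J = ∅ by simp [this]
    exact Finset.eq_empty_of_forall_notMem fun p hp => by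
      have := hIv p (hJ hp)
      have := hm p hp
      omega
  | case2 y h ih =>
    set xs := Nat.findGreatest (fun x => (x, y + 1) ∈ Iv) (y + 1)
    have hxs : (xs, y + 1) ∈ Iv := findGreatest_mem (fun p hp => (hIv p hp).2) h
    have hxs_le : xs ≤ y + 1 := Nat.findGreatest_le (y + 1)
    -- an interval of `J` reaching `xs` cannot start after `xs`, by maximality of `xs`
    have hcover : ∀ p ∈ J.filter (xs ≤ ·.2), xs ∈ Finset.Icc p.1 p.2 := by
      intro p hp
      rw [Finset.mem_filter] at hp
      refine Finset.mem_Icc.2 ⟨not_lt.1 fun hlt => ?_, hp.2⟩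
      have hpy : (p.1, y + 1) ∈ Iv := hnest hxs (hJ hp.1) hlt.le (hm p hp.1)
      exact absurd (Nat.le_findGreatest (hIv _ hpy).2 hpy) (not_le.2 hlt)
    have hlate : (J.filter (xs ≤ ·.2)).card ≤ 1 :=
      Finset.card_le_one_of_pairwiseDisjoint_of_mem
        (hdisj.subset (Finset.coe_subset.2 (Finset.filter_subset _ _))) hcover
    have hearly : (J.filter (¬ xs ≤ ·.2)).card ≤ (greedyScan Iv (xs - 1)).card := by
      refine ih ((Finset.coe_subset.2 (Finset.filter_subset _ _)).trans hJ)
        (hdisj.subset (Finset.coe_subset.2 (Finset.filter_subset _ _))) fun p hp => ?_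
      have := (Finset.mem_filter.1 hp).2
      omega
    have hnew : (xs, y + 1) ∉ greedyScan Iv (xs - 1) := fun hmem => by
      have := (snd_mem_Icc_of_mem_greedyScan hmem).2
      omega
    rw [Finset.card_insert_of_notMem hnew,
      ← Finset.card_filter_add_card_filter_not (fun p : ℕ × ℕ => xs ≤ p.2)]
    omega
  | case3 y h ih =>
    refine ih hJ hdisj fun p hp => Nat.le_of_lt_succ (lt_of_le_of_ne (hm p hp) fun hp2 => ?_)
    exact h ⟨p.1, by rw [← Nat.succ_eq_add_one, ← hp2]; exact hJ hp⟩

theorem isGreatest_card_greedyScan {n : ℕ} (hIv : ∀ p ∈ Iv, 1 ≤ p.1 ∧ p.1 ≤ p.2 ∧ p.2 ≤ n)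
    (hnest : ∀ ⦃p q⦄, p ∈ Iv → q ∈ Iv → p.1 ≤ q.1 → q.2 ≤ p.2 → (q.1, p.2) ∈ Iv) :
    IsGreatest {k | ∃ J : Finset (ℕ × ℕ), ↑J ⊆ Iv ∧
        (↑J : Set (ℕ × ℕ)).PairwiseDisjoint (fun p => Finset.Icc p.1 p.2) ∧ J.card = k}
      (greedyScan Iv n).card := by
  refine ⟨⟨_, greedyScan_subset (fun p hp => (hIv p hp).2.1) n,
    greedyScan_pairwiseDisjoint n, rfl⟩, ?_⟩
  rintro _ ⟨J, hJ, hdisj, rfl⟩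
  exact card_le_card_greedyScan (fun p hp => ⟨(hIv p hp).1, (hIv p hp).2.1⟩) hnest n hJ hdisj
    fun p hp => (hIv p (hJ hp)).2.2

end Greedy

theorem greedyScan_max_general (T P : ℕ → ℝ × ℝ) (n ℓ : ℕ) (hℓ : 1 ≤ ℓ) (Δ : ℝ)
    (Iv : Set (ℕ × ℕ))
    (hI : Iv = {p : ℕ × ℕ | 1 ≤ p.1 ∧ p.1 ≤ p.2 ∧ p.2 ≤ n ∧
      dF P ℓ (subtraj T p.1) (p.2 - p.1 + 1) ≤ Δ}) :
    IsGreatest {k : ℕ | ∃ J : Finset (ℕ × ℕ), (↑J : Set (ℕ × ℕ)) ⊆ Iv ∧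
        (∀ p ∈ J, ∀ q ∈ J, p ≠ q → Disjoint (Finset.Icc p.1 p.2) (Finset.Icc q.1 q.2)) ∧
        J.card = k}
      (greedyScan Iv n).card := by
  subst hI
  refine isGreatest_card_greedyScan (fun p hp => ⟨hp.1, hp.2.1, hp.2.2.1⟩) ?_
  rintro ⟨x, y⟩ ⟨a, b⟩ ⟨hx, -, hy, hdxy⟩ ⟨ha, hab, -, hdab⟩ hxa hby
  exact ⟨ha, hab.trans hby, hy, dF_subtraj_le_of_nested hℓ hx hxa hab hby hdxy hdab⟩

/-- greedy maximal-cardinality invariance: for the family Iv of intervals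
[x,y] ⊆ [1,n] with D_F(P, T[x,y]) ≤ Δ (closed under taking the maximal left endpoint for
a given right endpoint), the maximum number of pairwise disjoint intervals selectable
from Iv equals the number produced by the right-to-left greedy scan. -/
theorem greedyScan_max (T P : ℕ → ℝ × ℝ) (n ℓ : ℕ) (hℓ : 1 ≤ ℓ) (Δ : ℝ)
    (Iv : Set (ℕ × ℕ))
    (hI : Iv = {p : ℕ × ℕ | 1 ≤ p.1 ∧ p.1 ≤ p.2 ∧ p.2 ≤ n ∧
      dF P ℓ (subtraj T p.1) (p.2 - p.1 + 1) ≤ Δ})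
    (hclosed : ∀ p ∈ Iv, (∃ x' > p.1, (x', p.2) ∈ Iv) →
      ∃ x', (x', p.2) ∈ Iv ∧ ∀ x'', (x'', p.2) ∈ Iv → x'' ≤ x') :
    IsGreatest {k : ℕ | ∃ J : Finset (ℕ × ℕ), (↑J : Set (ℕ × ℕ)) ⊆ Iv ∧
        (∀ p ∈ J, ∀ q ∈ J, p ≠ q → Disjoint (Finset.Icc p.1 p.2) (Finset.Icc q.1 q.2)) ∧
        J.card = k}
      (greedyScan Iv n).card :=
  greedyScan_max_general T P n ℓ hℓ Δ Iv hI
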